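/- arXiv:2309.14599 — 3 statements merged into one kernel-verified Lean document; each statement's English description precedes it below -/
import Mathlib

section
/- Let R > 0 and z₀ < −R be fixed. There exist a number λ₀ > 1 and a constant C > 0, both depending only on R and z₀, such that for every λ ≥ λ₀ and every w ∈ C²([−R, R]; ℝ), ∫_{−R}^{R} e^{2λ(z−z₀)^{−2}} |w''(z)|² dz ≥ −C e^{2λ(R−z₀)^{−2}} (λ³ |w(R)|² + λ |w'(R)|²) − C e^{2λ(−R−z₀)^{−2}} (λ³ |w(−R)|² + λ |w'(−R)|²) + C λ³ ∫_{−R}^{R} e^{2λ(z−z₀)^{−2}} |w(z)|² dz − C λ ∫_{−R}^{R} e^{2λ(z−z₀)^{−2}} |w'(z)|² dz. -/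
/-!
If a weight `φ ≥ 0` satisfies `φ' ≤ -2kφ` with `k ≥ 0`, completing the square in `k u - u'` gives
the pointwise bound `φ (k²u² - u'²) ≤ (-k φ u²)'`; integrating over `[a, b]` and dropping the
boundary term at `b` yields `k² ∫ φ u² ≤ k φ(a) u(a)² + ∫ φ u'²`. Applied to `u = w` and `u = w'`,
this gives `k⁴ ∫ φ w² ≤ k³ φ(a) w(a)² + k φ(a) w'(a)² + ∫ φ w''²`.
The Carleman weight `exp (2λ / (z - z₀)²)` has logarithmic derivative `-4λ / (z - z₀)³`, which is
at most `-4λ / (R - z₀)³`, so it decays at rate `2k` with `k = δλ`, `δ = 2 / (R - z₀)³`. The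
resulting estimate has a factor `δ⁴λ⁴` in front of `∫ φ w²`, which beats `Cλ³` once `λ ≥ C / δ⁴`.
-/

open Set MeasureTheory intervalIntegral

section WeightedInequality

variable {a b k : ℝ} {φ φ' u u' : ℝ → ℝ}

lemma weight_mul_sub_sq_le {φ φ' u v : ℝ} (hk : 0 ≤ k) (hφ : 0 ≤ φ) (hφ' : φ' ≤ -2 * k * φ) :
    φ * (k ^ 2 * u ^ 2 - v ^ 2) ≤ -k * (φ' * u ^ 2 + φ * (2 * u * v)) := by
  nlinarith [mul_nonneg hφ (sq_nonneg (k * u - v)),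
    mul_nonneg hk (mul_nonneg (sub_nonneg.2 hφ') (sq_nonneg u))]

theorem weighted_sq_integral_le (hab : a ≤ b) (hk : 0 ≤ k)
    (hφ : ∀ z ∈ Icc a b, HasDerivWithinAt φ (φ' z) (Icc a b) z)
    (hφ_nonneg : ∀ z ∈ Icc a b, 0 ≤ φ z) (hφ' : ∀ z ∈ Icc a b, φ' z ≤ -2 * k * φ z)
    (hu : ∀ z ∈ Icc a b, HasDerivWithinAt u (u' z) (Icc a b) z)
    (hu' : ContinuousOn u' (Icc a b)) :
    k ^ 2 * ∫ z in a..b, φ z * u z ^ 2 ≤ k * φ a * u a ^ 2 + ∫ z in a..b, φ z * u' z ^ 2 := by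
  have hφc : ContinuousOn φ (Icc a b) := fun z hz => (hφ z hz).continuousWithinAt
  have huc : ContinuousOn u (Icc a b) := fun z hz => (hu z hz).continuousWithinAt
  have hI₀ : IntervalIntegrable (fun z => φ z * u z ^ 2) volume a b :=
    (hφc.mul (huc.pow 2)).intervalIntegrable_of_Icc hab
  have hI₁ : IntervalIntegrable (fun z => φ z * u' z ^ 2) volume a b :=
    (hφc.mul (hu'.pow 2)).intervalIntegrable_of_Icc hab
  have hderiv : ∀ z ∈ Ioo a b, HasDerivAt (fun z => -k * φ z * u z ^ 2)
      (-k * (φ' z * u z ^ 2 + φ z * (2 * u z * u' z))) z := fun z hz => by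
    have hz' := Icc_mem_nhds hz.1 hz.2
    have := (((hφ z (Ioo_subset_Icc_self hz)).hasDerivAt hz').const_mul (-k)).fun_mul
      (((hu z (Ioo_subset_Icc_self hz)).hasDerivAt hz').fun_pow 2)
    refine this.congr_deriv ?_
    norm_num
    ring
  have key : ∫ z in a..b, φ z * (k ^ 2 * u z ^ 2 - u' z ^ 2)
      ≤ -k * φ b * u b ^ 2 - -k * φ a * u a ^ 2 :=
    integral_le_sub_of_hasDeriv_right_of_le hab
      ((continuousOn_const.mul hφc).mul (huc.pow 2)) (fun z hz => (hderiv z hz).hasDerivWithinAt)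
      (hφc.mul ((continuousOn_const.mul (huc.pow 2)).sub (hu'.pow 2))).integrableOn_Icc
      (fun z hz => weight_mul_sub_sq_le hk (hφ_nonneg z (Ioo_subset_Icc_self hz))
        (hφ' z (Ioo_subset_Icc_self hz)))
  have hsplit : ∫ z in a..b, φ z * (k ^ 2 * u z ^ 2 - u' z ^ 2)
      = k ^ 2 * (∫ z in a..b, φ z * u z ^ 2) - ∫ z in a..b, φ z * u' z ^ 2 := by
    rw [← intervalIntegral.integral_const_mul, ← integral_sub (hI₀.const_mul _) hI₁]
    congr 1 with z
    ring
  have hb : 0 ≤ k * φ b * u b ^ 2 := by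
    have := hφ_nonneg b (right_mem_Icc.2 hab)
    positivity
  linarith

theorem weighted_sq_integral_le_second_order {u'' : ℝ → ℝ} (hab : a ≤ b) (hk : 0 ≤ k)
    (hφ : ∀ z ∈ Icc a b, HasDerivWithinAt φ (φ' z) (Icc a b) z)
    (hφ_nonneg : ∀ z ∈ Icc a b, 0 ≤ φ z) (hφ' : ∀ z ∈ Icc a b, φ' z ≤ -2 * k * φ z)
    (hu : ∀ z ∈ Icc a b, HasDerivWithinAt u (u' z) (Icc a b) z)
    (hu' : ∀ z ∈ Icc a b, HasDerivWithinAt u' (u'' z) (Icc a b) z)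
    (hu'' : ContinuousOn u'' (Icc a b)) :
    k ^ 4 * ∫ z in a..b, φ z * u z ^ 2
      ≤ k ^ 3 * φ a * u a ^ 2 + k * φ a * u' a ^ 2 + ∫ z in a..b, φ z * u'' z ^ 2 := by
  have h₀ := weighted_sq_integral_le hab hk hφ hφ_nonneg hφ' hu
    (fun z hz => (hu' z hz).continuousWithinAt)
  have h₁ := weighted_sq_integral_le hab hk hφ hφ_nonneg hφ' hu' hu''
  linear_combination k ^ 2 * h₀ + h₁

end WeightedInequality

noncomputable def carlemanWeight (lam z₀ z : ℝ) : ℝ := Real.exp (2 * lam / (z - z₀) ^ 2)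

lemma hasDerivAt_carlemanWeight (lam : ℝ) {z₀ z : ℝ} (hz : z ≠ z₀) :
    HasDerivAt (carlemanWeight lam z₀) (-(4 * lam) / (z - z₀) ^ 3 * carlemanWeight lam z₀ z) z := by
  have hpow : HasDerivAt (fun z => (z - z₀) ^ 2) (2 * (z - z₀)) z := by
    simpa using ((hasDerivAt_id z).sub_const z₀).fun_pow 2
  have := ((hasDerivAt_const z (2 * lam)).fun_div hpow (pow_ne_zero 2 (sub_ne_zero.2 hz))).exp
  refine this.congr_deriv ?_
  rw [carlemanWeight, mul_comm]
  field_simp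
  ring

lemma carlemanWeight_deriv_le {lam z₀ z R : ℝ} (hlam : 0 ≤ lam) (hz₀ : z₀ < z) (hzR : z ≤ R) :
    -(4 * lam) / (z - z₀) ^ 3 * carlemanWeight lam z₀ z
      ≤ -2 * (2 / (R - z₀) ^ 3 * lam) * carlemanWeight lam z₀ z := by
  have hz : 0 < z - z₀ := sub_pos.2 hz₀
  have hdiv : 4 * lam / (R - z₀) ^ 3 ≤ 4 * lam / (z - z₀) ^ 3 := by gcongr
  have hrate : -(4 * lam) / (z - z₀) ^ 3 ≤ -2 * (2 / (R - z₀) ^ 3 * lam) := by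
    rw [neg_div, show -2 * (2 / (R - z₀) ^ 3 * lam) = -(4 * lam / (R - z₀) ^ 3) by ring]
    exact neg_le_neg hdiv
  exact mul_le_mul_of_nonneg_right hrate (Real.exp_pos _).le

theorem carlemanWeight_sq_integral_le {R z₀ lam : ℝ} (hR : 0 < R) (hz₀ : z₀ < -R) (hlam : 0 ≤ lam)
    {w w' w'' : ℝ → ℝ}
    (hw : ∀ z ∈ Icc (-R) R, HasDerivWithinAt w (w' z) (Icc (-R) R) z)
    (hw' : ∀ z ∈ Icc (-R) R, HasDerivWithinAt w' (w'' z) (Icc (-R) R) z)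
    (hw'' : ContinuousOn w'' (Icc (-R) R)) :
    (2 / (R - z₀) ^ 3 * lam) ^ 4 * ∫ z in (-R)..R, carlemanWeight lam z₀ z * w z ^ 2
      ≤ (2 / (R - z₀) ^ 3 * lam) ^ 3 * carlemanWeight lam z₀ (-R) * w (-R) ^ 2
        + 2 / (R - z₀) ^ 3 * lam * carlemanWeight lam z₀ (-R) * w' (-R) ^ 2
        + ∫ z in (-R)..R, carlemanWeight lam z₀ z * w'' z ^ 2 :=
  have hδ : 0 < 2 / (R - z₀) ^ 3 := div_pos two_pos (pow_pos (by linarith) 3)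
  weighted_sq_integral_le_second_order (by linarith) (mul_nonneg hδ.le hlam)
    (fun z hz => (hasDerivAt_carlemanWeight lam (by linarith [hz.1])).hasDerivWithinAt)
    (fun _ _ => (Real.exp_pos _).le)
    (fun z hz => carlemanWeight_deriv_le hlam (by linarith [hz.1]) hz.2) hw hw' hw''

/-- Intermediate Carleman estimate (inequality (3.11)): as in the final Carleman estimate,
but the weighted integral of `|w'|²` still enters with a negative sign. -/
theorem carleman_estimate_intermediate (R z₀ : ℝ) (hR : 0 < R) (hz₀ : z₀ < -R) :
    ∃ lam₀ C : ℝ, 1 < lam₀ ∧ 0 < C ∧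
      ∀ lam : ℝ, lam₀ ≤ lam →
      ∀ w w' w'' : ℝ → ℝ,
        (∀ z ∈ Set.Icc (-R) R, HasDerivWithinAt w (w' z) (Set.Icc (-R) R) z) →
        (∀ z ∈ Set.Icc (-R) R, HasDerivWithinAt w' (w'' z) (Set.Icc (-R) R) z) →
        ContinuousOn w'' (Set.Icc (-R) R) →
        (∫ z in (-R)..R, Real.exp (2 * lam / (z - z₀) ^ 2) * (w'' z) ^ 2) ≥
          -C * Real.exp (2 * lam / (R - z₀) ^ 2) * (lam ^ 3 * (w R) ^ 2 + lam * (w' R) ^ 2)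
          - C * Real.exp (2 * lam / (-R - z₀) ^ 2) *
              (lam ^ 3 * (w (-R)) ^ 2 + lam * (w' (-R)) ^ 2)
          + C * lam ^ 3 * (∫ z in (-R)..R, Real.exp (2 * lam / (z - z₀) ^ 2) * (w z) ^ 2)
          - C * lam * ∫ z in (-R)..R, Real.exp (2 * lam / (z - z₀) ^ 2) * (w' z) ^ 2 := by
  set δ := 2 / (R - z₀) ^ 3 with hδ_def
  have hδ : 0 < δ := div_pos two_pos (pow_pos (by linarith) 3)
  have hδC : 0 < (δ + δ ^ 3) / δ ^ 4 := by positivity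
  refine ⟨1 + (δ + δ ^ 3) / δ ^ 4, δ + δ ^ 3, by linarith, by positivity,
    fun lam hlam w w' w'' hw hw' hw'' => ?_⟩
  have hlam_pos : 0 < lam := by linarith
  have hC : δ + δ ^ 3 ≤ δ ^ 4 * lam := by
    have : (δ + δ ^ 3) / δ ^ 4 ≤ lam := by linarith
    rwa [div_le_iff₀ (by positivity), mul_comm] at this
  have key := carlemanWeight_sq_integral_le hR hz₀ hlam_pos.le hw hw' hw''
  simp only [carlemanWeight, ← hδ_def] at key
  set I₀ := ∫ z in (-R)..R, Real.exp (2 * lam / (z - z₀) ^ 2) * w z ^ 2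
  set I₁ := ∫ z in (-R)..R, Real.exp (2 * lam / (z - z₀) ^ 2) * w' z ^ 2
  set M := Real.exp (2 * lam / (-R - z₀) ^ 2)
  have hI₀ : 0 ≤ I₀ := integral_nonneg (by linarith) fun z _ => by positivity
  have hI₁ : 0 ≤ I₁ := integral_nonneg (by linarith) fun z _ => by positivity
  have hI₀_coeff : 0 ≤ (δ ^ 4 * lam - (δ + δ ^ 3)) * (lam ^ 3 * I₀) :=
    mul_nonneg (sub_nonneg.2 hC) (by positivity)
  have hboundary_R : 0 ≤ (δ + δ ^ 3) * Real.exp (2 * lam / (R - z₀) ^ 2) *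
      (lam ^ 3 * w R ^ 2 + lam * w' R ^ 2) := by positivity
  have hw_coeff : 0 ≤ δ * lam ^ 3 * M * w (-R) ^ 2 := by positivity
  have hw'_coeff : 0 ≤ δ ^ 3 * lam * M * w' (-R) ^ 2 := by positivity
  have hI₁_coeff : 0 ≤ (δ + δ ^ 3) * lam * I₁ := by positivity
  linarith
end

section
/- Let R > 0, z₀ < −R, n ≥ 1 an integer, and C₀ > 0. There exist a number λ₁ > 1 and a constant C > 0, depending only on R, z₀, and C₀, with the following property: for every λ ≥ λ₁, every h ∈ C²([−R, R]; ℝⁿ), and every real number A ≥ 0, if ∫_{−R}^{R} e^{2λ(z−z₀)^{−2}} |h''(z)|² dz + λ⁴ e^{2λ(R−z₀)^{−2}} ( |h(R)|² + |h'(R)|² ) + λ⁴ e^{2λ(−R−z₀)^{−2}} ( |h(−R)|² + |h'(−R)|² ) ≤ C₀ [ ∫_{−R}^{R} e^{2λ(z−z₀)^{−2}} |h(z)|² dz + A ], then ∫_{−R}^{R} e^{2λ(z−z₀)^{−2}} |h(z)|² dz ≤ (C / λ³) A. -/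
/-!
Taylor's formula at `-R` writes `h z` through `h (-R)`, `h' (-R)` and the remainder
`∫ s in -R..z, (z - s) • h'' s`. The exponent `φ z = 2λ/(z - z₀)²` decreases at rate at least
`a = 2λ · 2(-R - z₀)/(R - z₀)⁴` (`φ + a · id` is antitone on `[-R, R]`), so Cauchy–Schwarz bounds
the weighted remainder `e^{φ z} (∫ (z - s) ‖h'' s‖)²` by
`(∫₀^∞ u² e^{-a u} du) · ∫ e^φ ‖h''‖² = 2a⁻³ ∫ e^φ ‖h''‖²`. Integrating in `z` gives the Carleman
estimate `λ³ ∫ e^φ ‖h‖² ≲ λ³ e^{φ (-R)} (‖h (-R)‖² + ‖h' (-R)‖²) + ∫ e^φ ‖h''‖²`. The hypothesis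
bounds its right-hand side by `C₀ (∫ e^φ ‖h‖² + A)`, and for `λ` large the resulting multiple of
`∫ e^φ ‖h‖²` is absorbed by the left-hand side.
-/

open Set MeasureTheory Real

theorem sq_integral_mul_le_integral_sq_mul_integral_sq {α : Type*} [MeasurableSpace α]
    {μ : Measure α} {f g : α → ℝ} (hf : Integrable (fun x => f x ^ 2) μ)
    (hg : Integrable (fun x => g x ^ 2) μ) (hfg : Integrable (fun x => f x * g x) μ) :
    (∫ x, f x * g x ∂μ) ^ 2 ≤ (∫ x, f x ^ 2 ∂μ) * ∫ x, g x ^ 2 ∂μ := by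
  have hquad : ∀ t : ℝ, 0 ≤ (∫ x, f x ^ 2 ∂μ) * (t * t) + -(2 * ∫ x, f x * g x ∂μ) * t
      + ∫ x, g x ^ 2 ∂μ := fun t => by
    have hexpand : ∫ x, (t * f x - g x) ^ 2 ∂μ
        = ∫ x, (t * t * f x ^ 2 + -(2 * t) * (f x * g x) + g x ^ 2) ∂μ :=
      integral_congr_ae (ae_of_all _ fun x => by ring)
    have hnonneg : 0 ≤ ∫ x, (t * f x - g x) ^ 2 ∂μ := integral_nonneg fun x => sq_nonneg _
    rw [hexpand, integral_add, integral_add, integral_const_mul, integral_const_mul] at hnonneg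
    · linarith
    exacts [hf.const_mul _, hfg.const_mul _, (hf.const_mul _).add (hfg.const_mul _), hg]
  have := discrim_le_zero hquad
  rw [discrim] at this
  linarith

theorem integral_sq_mul_exp_neg_le {a L : ℝ} (ha : 0 < a) (hL : 0 ≤ L) :
    ∫ u in 0..L, u ^ 2 * exp (-(a * u)) ≤ 2 / a ^ 3 := by
  set F : ℝ → ℝ := fun u => -(exp (-(a * u)) * (u ^ 2 / a + 2 * u / a ^ 2 + 2 / a ^ 3))
  have hF : ∀ u, HasDerivAt F (u ^ 2 * exp (-(a * u))) u := fun u => by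
    have hpoly : HasDerivAt (fun u => u ^ 2 / a + 2 * u / a ^ 2 + 2 / a ^ 3)
        (2 * u / a + 2 / a ^ 2) u :=
      ((((hasDerivAt_pow 2 u).div_const a).add (((hasDerivAt_id' u).const_mul 2).div_const
        (a ^ 2))).add_const (2 / a ^ 3)).congr_deriv (by ring)
    exact ((((hasDerivAt_id' u).const_mul a).neg.exp.mul hpoly).neg).congr_deriv
      (by simp only [Pi.neg_apply]; field_simp; ring)
  rw [intervalIntegral.integral_eq_sub_of_hasDerivAt (fun u _ => hF u)
    (Continuous.intervalIntegrable (by fun_prop) _ _)]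
  have htail : 0 ≤ exp (-(a * L)) * (L ^ 2 / a + 2 * L / a ^ 2 + 2 / a ^ 3) := by positivity
  norm_num [F]
  linarith

theorem mul_sub_le_inv_sq_sub_inv_sq {m M p q : ℝ} (hm : 0 < m) (hmp : m ≤ p) (hpq : p ≤ q)
    (hqM : q ≤ M) : 2 * m / M ^ 4 * (q - p) ≤ 1 / p ^ 2 - 1 / q ^ 2 := by
  have hp : 0 < p := hm.trans_le hmp
  have hq : 0 < q := hp.trans_le hpq
  have hdiff : 1 / p ^ 2 - 1 / q ^ 2 = (q + p) / (p ^ 2 * q ^ 2) * (q - p) := by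
    field_simp
    ring
  have hden : p ^ 2 * q ^ 2 ≤ M ^ 4 := by
    calc p ^ 2 * q ^ 2 ≤ q ^ 2 * q ^ 2 := by gcongr
      _ ≤ M ^ 2 * M ^ 2 := by gcongr
      _ = M ^ 4 := by ring
  rw [hdiff]
  gcongr
  linarith

theorem antitoneOn_div_sq_add_mul {lam z₀ b c : ℝ} (hlam : 0 ≤ lam) (hz₀ : z₀ < b) :
    AntitoneOn (fun z => 2 * lam / (z - z₀) ^ 2 + 2 * lam * (2 * (b - z₀) / (c - z₀) ^ 4) * z)
      (Icc b c) := by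
  intro s hs z hz hsz
  have hgap := mul_sub_le_inv_sq_sub_inv_sq (sub_pos.2 hz₀) (sub_le_sub_right hs.1 z₀)
    (sub_le_sub_right hsz z₀) (sub_le_sub_right hz.2 z₀)
  have := mul_le_mul_of_nonneg_left hgap (by positivity : 0 ≤ 2 * lam)
  linear_combination this

theorem exp_mul_sq_integral_le {φ g : ℝ → ℝ} {a b z : ℝ} (ha : 0 < a) (hbz : b ≤ z)
    (hφ : ContinuousOn φ (Icc b z)) (hg : ContinuousOn g (Icc b z))
    (hdecay : AntitoneOn (fun x => φ x + a * x) (Icc b z)) :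
    exp (φ z) * (∫ s in b..z, (z - s) * g s) ^ 2
      ≤ 2 / a ^ 3 * ∫ s in b..z, exp (φ s) * g s ^ 2 := by
  have exp_half_sq : ∀ x, exp (x / 2) ^ 2 = exp x := fun x => by
    rw [← exp_nat_mul]; ring_nf
  set f : ℝ → ℝ := fun s => (z - s) * exp ((φ z - φ s) / 2)
  set G : ℝ → ℝ := fun s => exp (φ s / 2) * g s
  have hfG : ∀ s, f s * G s = exp (φ z / 2) * ((z - s) * g s) := fun s => by
    have : exp ((φ z - φ s) / 2) * exp (φ s / 2) = exp (φ z / 2) := by rw [← exp_add]; ring_nf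
    linear_combination (z - s) * g s * this
  have hf2 : ∀ s ∈ Icc b z, f s ^ 2 ≤ (z - s) ^ 2 * exp (-(a * (z - s))) := fun s hs => by
    have := hdecay hs ⟨hbz, le_rfl⟩ hs.2
    simp only [f, mul_pow, exp_half_sq]
    gcongr
    linarith
  have hG2 : ∀ s, G s ^ 2 = exp (φ s) * g s ^ 2 := fun s => by
    simp only [G, mul_pow, exp_half_sq]
  have hfc : ContinuousOn f (Icc b z) := by fun_prop
  have hGc : ContinuousOn G (Icc b z) := by fun_prop
  have hint : ∀ {F : ℝ → ℝ}, ContinuousOn F (Icc b z) →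
      Integrable F (volume.restrict (Ioc b z)) :=
    fun hF => hF.integrableOn_Icc.mono_set Ioc_subset_Icc_self
  have hcs := sq_integral_mul_le_integral_sq_mul_integral_sq (hint (hfc.pow 2)) (hint (hGc.pow 2))
    (hint (hfc.mul hGc))
  simp only [← intervalIntegral.integral_of_le hbz, hfG, hG2] at hcs
  have hkernel : ∫ s in b..z, f s ^ 2 ≤ 2 / a ^ 3 := by
    calc ∫ s in b..z, f s ^ 2 ≤ ∫ s in b..z, (z - s) ^ 2 * exp (-(a * (z - s))) :=
          intervalIntegral.integral_mono_on hbz ((hfc.pow 2).intervalIntegrable_of_Icc hbz)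
            (Continuous.intervalIntegrable (by fun_prop) _ _) hf2
      _ = ∫ u in 0..z - b, u ^ 2 * exp (-(a * u)) := by
          rw [intervalIntegral.integral_comp_sub_left (fun u => u ^ 2 * exp (-(a * u))), sub_self]
      _ ≤ 2 / a ^ 3 := integral_sq_mul_exp_neg_le ha (sub_nonneg.2 hbz)
  have hG0 : 0 ≤ ∫ s in b..z, exp (φ s) * g s ^ 2 :=
    intervalIntegral.integral_nonneg hbz fun s _ => by positivity
  calc exp (φ z) * (∫ s in b..z, (z - s) * g s) ^ 2
      = (∫ s in b..z, exp (φ z / 2) * ((z - s) * g s)) ^ 2 := by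
        rw [intervalIntegral.integral_const_mul, mul_pow, exp_half_sq]
    _ ≤ (∫ s in b..z, f s ^ 2) * ∫ s in b..z, exp (φ s) * g s ^ 2 := hcs
    _ ≤ 2 / a ^ 3 * ∫ s in b..z, exp (φ s) * g s ^ 2 := by gcongr

section CarlemanEstimate

variable {E : Type*} [NormedAddCommGroup E] [NormedSpace ℝ E] [CompleteSpace E]
  {φ : ℝ → ℝ} {h h' h'' : ℝ → E} {a b c : ℝ}

theorem taylor_order_one_integral_remainder {z : ℝ}
    (hh : ∀ x ∈ Icc b c, HasDerivWithinAt h (h' x) (Icc b c) x)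
    (hh' : ∀ x ∈ Icc b c, HasDerivWithinAt h' (h'' x) (Icc b c) x)
    (hc : ContinuousOn h'' (Icc b c)) (hz : z ∈ Icc b c) :
    h z = h b + (z - b) • h' b + ∫ s in b..z, (z - s) • h'' s := by
  have hsub : Icc b z ⊆ Icc b c := Icc_subset_Icc le_rfl hz.2
  have hcont : ContinuousOn (fun s => h s + (z - s) • h' s) (Icc b z) :=
    (HasDerivWithinAt.continuousOn hh |>.mono hsub).add
      ((continuousOn_const.sub continuousOn_id).smul
        (HasDerivWithinAt.continuousOn hh' |>.mono hsub))
  have hderiv : ∀ s ∈ Ioo b z,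
      HasDerivAt (fun s => h s + (z - s) • h' s) ((z - s) • h'' s) s := fun s hs => by
    have hnhds : Icc b c ∈ nhds s := Icc_mem_nhds hs.1 (hs.2.trans_le hz.2)
    have hsbc := hsub (Ioo_subset_Icc_self hs)
    exact (((hh s hsbc).hasDerivAt hnhds).add (((hasDerivAt_id' s).const_sub z).smul
      ((hh' s hsbc).hasDerivAt hnhds))).congr_deriv (by module)
  rw [intervalIntegral.integral_eq_sub_of_hasDeriv_right_of_le hz.1 hcont
    (fun s hs => (hderiv s hs).hasDerivWithinAt)
    (((continuousOn_const.sub continuousOn_id).smul (hc.mono hsub)).intervalIntegrable_of_Icc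
      hz.1)]
  simp only [sub_self, zero_smul, add_zero]
  abel

theorem exp_mul_sq_norm_le (ha : 0 < a) (hφ : ContinuousOn φ (Icc b c))
    (hdecay : AntitoneOn (fun x => φ x + a * x) (Icc b c))
    (hh : ∀ x ∈ Icc b c, HasDerivWithinAt h (h' x) (Icc b c) x)
    (hh' : ∀ x ∈ Icc b c, HasDerivWithinAt h' (h'' x) (Icc b c) x)
    (hc : ContinuousOn h'' (Icc b c)) {z : ℝ} (hz : z ∈ Icc b c) :
    exp (φ z) * ‖h z‖ ^ 2 ≤ 3 * (1 + (c - b) ^ 2) * (exp (φ b) * (‖h b‖ ^ 2 + ‖h' b‖ ^ 2))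
      + 6 / a ^ 3 * ∫ s in b..c, exp (φ s) * ‖h'' s‖ ^ 2 := by
  have hb : b ∈ Icc b c := ⟨le_rfl, hz.1.trans hz.2⟩
  have hsub : Icc b z ⊆ Icc b c := Icc_subset_Icc le_rfl hz.2
  set r := ∫ s in b..z, (z - s) * ‖h'' s‖
  have hnorm : ‖h z‖ ≤ ‖h b‖ + (c - b) * ‖h' b‖ + r := by
    rw [taylor_order_one_integral_remainder hh hh' hc hz]
    refine norm_add₃_le.trans (add_le_add (add_le_add le_rfl ?_) ?_)
    · rw [norm_smul, Real.norm_of_nonneg (sub_nonneg.2 hz.1)]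
      gcongr
      exact hz.2
    · refine (intervalIntegral.norm_integral_le_integral_norm hz.1).trans_eq
        (intervalIntegral.integral_congr fun s hs => ?_)
      rw [uIcc_of_le hz.1] at hs
      rw [norm_smul, Real.norm_of_nonneg (sub_nonneg.2 hs.2)]
  have hsq : ‖h z‖ ^ 2 ≤ 3 * (‖h b‖ ^ 2 + (c - b) ^ 2 * ‖h' b‖ ^ 2 + r ^ 2) := by
    nlinarith [pow_le_pow_left₀ (norm_nonneg _) hnorm 2, sq_nonneg (‖h b‖ - (c - b) * ‖h' b‖),
      sq_nonneg (‖h b‖ - r), sq_nonneg ((c - b) * ‖h' b‖ - r)]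
  have hweight : exp (φ z) ≤ exp (φ b) := by
    have := hdecay hb hz hz.1
    rw [exp_le_exp]
    nlinarith [mul_nonneg ha.le (sub_nonneg.2 hz.1)]
  have hrem : exp (φ z) * r ^ 2 ≤ 2 / a ^ 3 * ∫ s in b..c, exp (φ s) * ‖h'' s‖ ^ 2 := by
    refine (exp_mul_sq_integral_le ha hz.1 (hφ.mono hsub) (hc.norm.mono hsub)
      (hdecay.mono hsub)).trans ?_
    gcongr
    refine intervalIntegral.integral_mono_interval le_rfl hz.1 hz.2
      (ae_of_all _ fun s => by positivity) ?_
    exact (hφ.rexp.mul (hc.norm.pow 2)).intervalIntegrable_of_Icc hb.2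
  have hboundary : ‖h b‖ ^ 2 + (c - b) ^ 2 * ‖h' b‖ ^ 2
      ≤ (1 + (c - b) ^ 2) * (‖h b‖ ^ 2 + ‖h' b‖ ^ 2) := by
    nlinarith [sq_nonneg ((c - b) * ‖h b‖), sq_nonneg ‖h' b‖]
  calc exp (φ z) * ‖h z‖ ^ 2
      ≤ 3 * (exp (φ z) * (‖h b‖ ^ 2 + (c - b) ^ 2 * ‖h' b‖ ^ 2)) + 3 * (exp (φ z) * r ^ 2) := by
        nlinarith [mul_le_mul_of_nonneg_left hsq (exp_pos (φ z)).le]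
    _ ≤ 3 * (exp (φ b) * ((1 + (c - b) ^ 2) * (‖h b‖ ^ 2 + ‖h' b‖ ^ 2)))
        + 3 * (2 / a ^ 3 * ∫ s in b..c, exp (φ s) * ‖h'' s‖ ^ 2) := by
        gcongr
    _ = _ := by ring

theorem integral_exp_mul_sq_norm_le (ha : 0 < a) (hbc : b ≤ c) (hφ : ContinuousOn φ (Icc b c))
    (hdecay : AntitoneOn (fun x => φ x + a * x) (Icc b c))
    (hh : ∀ x ∈ Icc b c, HasDerivWithinAt h (h' x) (Icc b c) x)
    (hh' : ∀ x ∈ Icc b c, HasDerivWithinAt h' (h'' x) (Icc b c) x)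
    (hc : ContinuousOn h'' (Icc b c)) :
    ∫ z in b..c, exp (φ z) * ‖h z‖ ^ 2 ≤ (c - b) * (3 * (1 + (c - b) ^ 2)
      * (exp (φ b) * (‖h b‖ ^ 2 + ‖h' b‖ ^ 2))
        + 6 / a ^ 3 * ∫ s in b..c, exp (φ s) * ‖h'' s‖ ^ 2) := by
  have hint : IntervalIntegrable (fun z => exp (φ z) * ‖h z‖ ^ 2) volume b c :=
    (hφ.rexp.mul ((HasDerivWithinAt.continuousOn hh).norm.pow 2)).intervalIntegrable_of_Icc hbc
  have := intervalIntegral.integral_mono_on hbc hint intervalIntegrable_const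
    fun z hz => exp_mul_sq_norm_le ha hφ hdecay hh hh' hc hz
  rwa [intervalIntegral.integral_const, smul_eq_mul] at this

theorem carleman_estimate {R z₀ lam : ℝ} (hR : 0 ≤ R) (hz₀ : z₀ < -R) (hlam : 0 < lam)
    (hh : ∀ x ∈ Icc (-R) R, HasDerivWithinAt h (h' x) (Icc (-R) R) x)
    (hh' : ∀ x ∈ Icc (-R) R, HasDerivWithinAt h' (h'' x) (Icc (-R) R) x)
    (hc : ContinuousOn h'' (Icc (-R) R)) :
    lam ^ 3 * ∫ z in (-R)..R, exp (2 * lam / (z - z₀) ^ 2) * ‖h z‖ ^ 2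
      ≤ 6 * R * (1 + 4 * R ^ 2)
          * (lam ^ 3 * (exp (2 * lam / (-R - z₀) ^ 2) * (‖h (-R)‖ ^ 2 + ‖h' (-R)‖ ^ 2)))
        + 3 * R * (R - z₀) ^ 12 / (16 * (-R - z₀) ^ 3)
          * ∫ z in (-R)..R, exp (2 * lam / (z - z₀) ^ 2) * ‖h'' z‖ ^ 2 := by
  have hrate : 0 < 2 * (-R - z₀) / (R - z₀) ^ 4 := div_pos (by linarith) (pow_pos (by linarith) 4)
  have hφ : ContinuousOn (fun z => 2 * lam / (z - z₀) ^ 2) (Icc (-R) R) :=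
    continuousOn_const.div (by fun_prop) fun z hz => by nlinarith [hz.1]
  have hest := integral_exp_mul_sq_norm_le (a := 2 * lam * (2 * (-R - z₀) / (R - z₀) ^ 4))
    (by positivity) (by linarith) hφ (antitoneOn_div_sq_add_mul hlam.le hz₀) hh hh' hc
  refine (mul_le_mul_of_nonneg_left hest (by positivity)).trans_eq ?_
  field_simp
  ring

end CarlemanEstimate

theorem le_two_mul_div_mul_of_mul_le_mul_add {t K x A : ℝ} (ht : 0 < t) (hx : 0 ≤ x)
    (hK : 2 * K ≤ t) (h : t * x ≤ K * (x + A)) : x ≤ 2 * K / t * A := by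
  rw [div_mul_eq_mul_div, le_div_iff₀ ht]
  nlinarith

/-- The absorption step of the Carleman–Picard iteration: there are `λ₁ > 1` and `C > 0`
depending only on `R`, `z₀`, and `C₀`, such that for every `λ ≥ λ₁`, every
`h ∈ C²([-R, R]; ℝⁿ)`, and every `A ≥ 0`, if the Carleman-weighted quasi-reversibility
inequality holds, then `∫ e^{2λ(z-z₀)⁻²} ‖h‖² ≤ (C/λ³) A`. -/
theorem carleman_picard_absorption (R z₀ C₀ : ℝ) (hR : 0 < R) (hz₀ : z₀ < -R)
    (hC₀ : 0 < C₀) :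
    ∃ lam₁ C : ℝ, 1 < lam₁ ∧ 0 < C ∧
      ∀ n : ℕ, 1 ≤ n →
      ∀ lam : ℝ, lam₁ ≤ lam →
      ∀ h h' h'' : ℝ → EuclideanSpace ℝ (Fin n),
        (∀ z ∈ Set.Icc (-R) R, HasDerivWithinAt h (h' z) (Set.Icc (-R) R) z) →
        (∀ z ∈ Set.Icc (-R) R, HasDerivWithinAt h' (h'' z) (Set.Icc (-R) R) z) →
        ContinuousOn h'' (Set.Icc (-R) R) →
        ∀ A : ℝ, 0 ≤ A →
        ((∫ z in (-R)..R, Real.exp (2 * lam / (z - z₀) ^ 2) * ‖h'' z‖ ^ 2)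
          + lam ^ 4 * Real.exp (2 * lam / (R - z₀) ^ 2) * (‖h R‖ ^ 2 + ‖h' R‖ ^ 2)
          + lam ^ 4 * Real.exp (2 * lam / (-R - z₀) ^ 2) * (‖h (-R)‖ ^ 2 + ‖h' (-R)‖ ^ 2)
          ≤ C₀ * ((∫ z in (-R)..R, Real.exp (2 * lam / (z - z₀) ^ 2) * ‖h z‖ ^ 2) + A)) →
        (∫ z in (-R)..R, Real.exp (2 * lam / (z - z₀) ^ 2) * ‖h z‖ ^ 2)
          ≤ (C / lam ^ 3) * A := by
  have hk₂ : 0 ≤ 3 * R * (R - z₀) ^ 12 / (16 * (-R - z₀) ^ 3) :=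
    div_nonneg (by positivity) (mul_nonneg (by norm_num) (pow_nonneg (by linarith) 3))
  set K := C₀ * (6 * R * (1 + 4 * R ^ 2) + 3 * R * (R - z₀) ^ 12 / (16 * (-R - z₀) ^ 3))
  have hK : 0 < K := mul_pos hC₀ (add_pos_of_pos_of_nonneg (by positivity) hk₂)
  refine ⟨2 + 2 * K, 2 * K, by linarith, by linarith, ?_⟩
  intro n _ lam hlam h h' h'' hh hh' hc A hA hyp
  have hlam1 : 1 ≤ lam := by linarith
  set I := ∫ z in (-R)..R, exp (2 * lam / (z - z₀) ^ 2) * ‖h z‖ ^ 2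
  set D := ∫ z in (-R)..R, exp (2 * lam / (z - z₀) ^ 2) * ‖h'' z‖ ^ 2
  set W := exp (2 * lam / (-R - z₀) ^ 2) * (‖h (-R)‖ ^ 2 + ‖h' (-R)‖ ^ 2)
  have hW0 : 0 ≤ W := by positivity
  have hD0 : 0 ≤ D := intervalIntegral.integral_nonneg (by linarith) fun z _ => by positivity
  have hright : 0 ≤ lam ^ 4 * exp (2 * lam / (R - z₀) ^ 2) * (‖h R‖ ^ 2 + ‖h' R‖ ^ 2) := by
    positivity
  rw [mul_assoc (lam ^ 4) (exp (2 * lam / (-R - z₀) ^ 2))] at hyp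
  have hboundary : lam ^ 4 * W ≤ C₀ * (I + A) := by linarith
  have hD : D ≤ C₀ * (I + A) := by linarith [mul_nonneg (by positivity : (0 : ℝ) ≤ lam ^ 4) hW0]
  have hW : lam ^ 3 * W ≤ C₀ * (I + A) :=
    (mul_le_mul_of_nonneg_right (pow_le_pow_right₀ hlam1 (by norm_num)) hW0).trans hboundary
  refine le_two_mul_div_mul_of_mul_le_mul_add (by positivity)
    (intervalIntegral.integral_nonneg (by linarith) fun z _ => by positivity)
    (by nlinarith [pow_le_pow_right₀ hlam1 (by norm_num : 1 ≤ 3)]) ?_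
  refine (carleman_estimate hR.le hz₀ (by linarith) hh hh' hc).trans
    ((add_le_add (mul_le_mul_of_nonneg_left hW (by positivity))
      (mul_le_mul_of_nonneg_left hD hk₂)).trans_eq ?_)
  ring
end

section
/- Let d ≥ 1, let Ω ⊂ ℝ^d, let c : ℝ^d → ℝ be continuous, let p : ℝ^d → ℝ be twice continuously differentiable with p(x) ≠ 0 for all x in the closure of Ω, and let u : ℝ^d × [0, ∞) → ℝ be continuous and three times continuously differentiable on ℝ^d × (0, ∞), with ∂_t u and Δ_x u extending continuously to t = 0. Suppose ∂_t u = Δ_x u + c u on ℝ^d × (0, ∞) and u(x, 0) = p(x) for all x ∈ ℝ^d. Set v := ∂_t u. Then: (i) v(x, 0) = Δp(x) + c(x) p(x) for all x ∈ Ω; (ii) c(x) = (v(x, 0) − Δp(x)) / p(x) for all x ∈ Ω; and (iii) v satisfies the nonlinear, nonlocal equation ∂_t v(x, t) = Δ_x v(x, t) + ((v(x, 0) − Δp(x)) / p(x)) v(x, t) for all (x, t) ∈ Ω × (0, ∞). -/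
/-
The value at `t = 0` of the continuous extension `L` of `Δₓu` is `Δp`, and everything else
follows from it: letting `t → 0⁺` in `∂ₜu = Δₓu + c u` gives `v(·,0) = Δp + c p`, dividing by
`p` gives `c`, and differentiating the equation in `t` gives the equation for `v`, because `∂ₜ`
commutes with `Δₓ` for `C³` functions (symmetry of third derivatives, obtained from two
applications of the symmetry of second derivatives).

That `L(·,0) = Δp` is a closedness property of the Laplacian: if `C²` functions `F_t` converge
uniformly to `f` near `x₀` while `ΔF_t(x) → k` as `(x, t) → (x₀, 0⁺)`, then `Δf(x₀) = k`.
Otherwise, say, `Δ(F_t - f) ≥ κ > 0` on a ball of radius `r`; subtracting a paraboloid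
`a‖x - x₀‖²` keeps the Laplacian positive, so by the weak maximum principle (a function with
positive Laplacian has no interior maximum) the value at the centre is dominated by a value on
the sphere. This forces `κ r² ≤ 4 (d + 1) sup |F_t - f|`, whose right side tends to `0`.
-/

/-- The spatial Laplacian of a function `f : ℝᵈ → ℝ` at `x`, defined as the sum of the
second derivatives of `f` along the coordinate directions. -/
noncomputable def spatialLaplacian {d : ℕ} (f : EuclideanSpace ℝ (Fin d) → ℝ)
    (x : EuclideanSpace ℝ (Fin d)) : ℝ :=
  ∑ i : Fin d, iteratedDeriv 2 (fun s : ℝ => f (x + s • EuclideanSpace.single i (1 : ℝ))) 0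

open Filter Set Topology Metric

section LineDeriv

variable {V W : Type*} [NormedAddCommGroup V] [NormedSpace ℝ V]
  [NormedAddCommGroup W] [NormedSpace ℝ W]

theorem deriv_comp_add_smul (f : V → W) (x v : V) (s : ℝ) :
    deriv (fun s : ℝ => f (x + s • v)) s = lineDeriv ℝ f (x + s • v) v := by
  simpa [lineDeriv, add_assoc, ← add_smul, add_comm] using
    (deriv_comp_add_const (f := fun s : ℝ => f (x + s • v)) (a := s) (x := 0)).symm

theorem iteratedDeriv_two_comp_add_smul (f : V → W) (x v : V) :
    iteratedDeriv 2 (fun s : ℝ => f (x + s • v)) 0 =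
      lineDeriv ℝ (fun y => lineDeriv ℝ f y v) x v := by
  rw [iteratedDeriv_succ, iteratedDeriv_one, funext (deriv_comp_add_smul f x v),
    deriv_comp_add_smul (fun y => lineDeriv ℝ f y v), zero_smul, add_zero]

theorem ContDiffAt.lineDeriv_lineDeriv {f : V → W} {x : V} (hf : ContDiffAt ℝ 2 f x) (v w : V) :
    lineDeriv ℝ (fun y => lineDeriv ℝ f y w) x v = fderiv ℝ (fderiv ℝ f) x v w := by
  have hlin : (fun y => lineDeriv ℝ f y w) =ᶠ[𝓝 x] fun y => fderiv ℝ f y w :=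
    (hf.eventually (by simp)).mono fun y hy =>
      (hy.differentiableAt two_ne_zero).lineDeriv_eq_fderiv
  have hD : DifferentiableAt ℝ (fderiv ℝ f) x :=
    (hf.fderiv_right (m := 1) le_rfl).differentiableAt one_ne_zero
  rw [hlin.lineDeriv_eq, (hD.clm_apply (differentiableAt_const w)).lineDeriv_eq_fderiv,
    fderiv_clm_apply hD (differentiableAt_const w)]
  simp

theorem ContDiffAt.lineDeriv_lineDeriv_comm {f : V → W} {x : V} (hf : ContDiffAt ℝ 2 f x)
    (v w : V) :
    lineDeriv ℝ (fun y => lineDeriv ℝ f y w) x v =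
      lineDeriv ℝ (fun y => lineDeriv ℝ f y v) x w := by
  rw [hf.lineDeriv_lineDeriv, hf.lineDeriv_lineDeriv, hf.isSymmSndFDerivAt (by simp) v w]

theorem ContDiffAt.lineDeriv_right {f : V → W} {x : V} {n : ℕ} (hf : ContDiffAt ℝ (n + 1) f x)
    (v : V) : ContDiffAt ℝ n (fun y => lineDeriv ℝ f y v) x := by
  have hlin : (fun y => lineDeriv ℝ f y v) =ᶠ[𝓝 x] fun y => fderiv ℝ f y v :=
    (hf.eventually (by simp)).mono fun y hy =>
      (hy.differentiableAt (by simp)).lineDeriv_eq_fderiv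
  exact ((hf.fderiv_right le_rfl).clm_apply contDiffAt_const).congr_of_eventuallyEq hlin

theorem ContDiffAt.lineDeriv_lineDeriv_lineDeriv_comm {f : V → W} {x : V}
    (hf : ContDiffAt ℝ 3 f x) (a b c : V) :
    lineDeriv ℝ (fun y => lineDeriv ℝ (fun z => lineDeriv ℝ f z a) y b) x c =
      lineDeriv ℝ (fun y => lineDeriv ℝ (fun z => lineDeriv ℝ f z c) y a) x b := by
  have hsymm : (fun y => lineDeriv ℝ (fun z => lineDeriv ℝ f z a) y c) =ᶠ[𝓝 x]
      fun y => lineDeriv ℝ (fun z => lineDeriv ℝ f z c) y a :=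
    (hf.eventually (by simp)).mono fun y hy => (hy.of_le (by norm_num)).lineDeriv_lineDeriv_comm c a
  rw [(hf.lineDeriv_right (n := 2) a).lineDeriv_lineDeriv_comm, hsymm.lineDeriv_eq]

end LineDeriv

theorem IsLocalMax.deriv_deriv_nonpos {f : ℝ → ℝ} {a : ℝ} (h : IsLocalMax f a)
    (hf : ContinuousAt f a) : deriv (deriv f) a ≤ 0 := by
  by_contra! hpos
  -- then `a` is also a local minimum, so `f` is constant near `a` and `f'' a = 0`
  have hconst : f =ᶠ[𝓝 a] fun _ => f a :=
    (h.and (isLocalMin_of_deriv_deriv_pos hpos h.deriv_eq_zero hf)).mono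
      fun y hy => le_antisymm hy.1 hy.2
  have hderiv : deriv f =ᶠ[𝓝 a] fun _ => 0 :=
    hconst.eventuallyEq_nhds.mono fun y hy => by rw [hy.deriv_eq, deriv_const]
  rw [hderiv.deriv_eq, deriv_const] at hpos
  exact hpos.false

section

variable {X Y : Type*} [TopologicalSpace X] [TopologicalSpace Y]

theorem ContinuousOn.tendsto_nhds_prod_nhdsGT_zero {w : X → ℝ → Y}
    (hw : ContinuousOn (fun q : X × ℝ => w q.1 q.2) (univ ×ˢ Ici 0)) (x : X) :
    Tendsto (fun q : X × ℝ => w q.1 q.2) (𝓝 x ×ˢ 𝓝[>] 0) (𝓝 (w x 0)) := by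
  refine (hw (x, 0) ⟨trivial, self_mem_Ici⟩).tendsto.mono_left ?_
  rw [nhdsWithin_prod_eq, nhdsWithin_univ]
  exact prod_mono le_rfl (nhdsWithin_mono _ Ioi_subset_Ici_self)

theorem ContinuousOn.tendsto_nhdsGT_zero {w : X → ℝ → Y}
    (hw : ContinuousOn (fun q : X × ℝ => w q.1 q.2) (univ ×ˢ Ici 0)) (x : X) :
    Tendsto (w x) (𝓝[>] 0) (𝓝 (w x 0)) :=
  (hw.tendsto_nhds_prod_nhdsGT_zero x).comp (tendsto_const_nhds.prodMk tendsto_id)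

end

theorem ContinuousOn.tendstoUniformlyOn_nhdsGE_zero {X Y : Type*} [UniformSpace X]
    [UniformSpace Y] {w : X → ℝ → Y}
    (hw : ContinuousOn (fun q : X × ℝ => w q.1 q.2) (univ ×ˢ Ici 0)) {K : Set X}
    (hK : IsCompact K) :
    TendstoUniformlyOn (fun t ξ => w ξ t) (fun ξ => w ξ 0) (𝓝[≥] 0) K := by
  have hcont : ContinuousOn (fun q : ℝ × X => w q.2 q.1) (Icc 0 1 ×ˢ K) :=
    hw.comp continuous_swap.continuousOn fun q hq => ⟨trivial, hq.1.1⟩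
  rw [← nhdsWithin_Icc_eq_nhdsGE zero_lt_one]
  exact ((isCompact_Icc.prod hK).uniformContinuousOn_of_continuous hcont).tendstoUniformlyOn
    ⟨le_rfl, zero_le_one⟩

section

variable {d : ℕ}

local notation "ℝᵈ" => EuclideanSpace ℝ (Fin d)

theorem spatialLaplacian_neg (f : ℝᵈ → ℝ) (x : ℝᵈ) :
    spatialLaplacian (-f) x = -spatialLaplacian f x := by
  simp [spatialLaplacian, iteratedDeriv_fun_neg]

theorem ContDiff.spatialLaplacian_sub {f g : ℝᵈ → ℝ} (hf : ContDiff ℝ 2 f) (hg : ContDiff ℝ 2 g)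
    (x : ℝᵈ) : spatialLaplacian (f - g) x = spatialLaplacian f x - spatialLaplacian g x := by
  simp only [spatialLaplacian, ← Finset.sum_sub_distrib]
  refine Finset.sum_congr rfl fun i _ => ?_
  have hline : ContDiff ℝ 2 fun s : ℝ => x + s • EuclideanSpace.single i (1 : ℝ) := by fun_prop
  exact iteratedDeriv_sub (hf.comp hline).contDiffAt (hg.comp hline).contDiffAt

theorem spatialLaplacian_const_mul_norm_sub_sq (a : ℝ) (x₀ x : ℝᵈ) :
    spatialLaplacian (fun ξ => a * ‖ξ - x₀‖ ^ 2) x = 2 * a * d := by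
  have hline : ∀ i : Fin d, (fun s : ℝ => a * ‖x + s • EuclideanSpace.single i (1 : ℝ) - x₀‖ ^ 2) =
      fun s => a * ‖x - x₀‖ ^ 2 + 2 * a * inner ℝ (x - x₀) (EuclideanSpace.single i (1 : ℝ)) * s
        + a * s ^ 2 := fun i => funext fun s => by
    rw [add_sub_right_comm, norm_add_sq_real, real_inner_smul_right, norm_smul,
      PiLp.norm_single]
    simp only [norm_one, mul_one, Real.norm_eq_abs, sq_abs]
    ring
  have hquad : ∀ A B : ℝ, iteratedDeriv 2 (fun s : ℝ => A + B * s + a * s ^ 2) 0 = 2 * a := by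
    intro A B
    have : deriv (fun s : ℝ => A + B * s + a * s ^ 2) = fun s => B + a * (2 * s) := by
      ext s; simp (disch := fun_prop)
    simp [iteratedDeriv_succ, this, mul_comm]
  simp only [spatialLaplacian, hline, hquad, Finset.sum_const, Finset.card_univ, Fintype.card_fin,
    nsmul_eq_mul]
  ring

theorem IsLocalMax.spatialLaplacian_nonpos {f : ℝᵈ → ℝ} {x : ℝᵈ} (h : IsLocalMax f x)
    (hf : ContinuousAt f x) : spatialLaplacian f x ≤ 0 := by
  refine Finset.sum_nonpos fun i _ => ?_
  set g : ℝ → ℝᵈ := fun s => x + s • EuclideanSpace.single i (1 : ℝ)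
  have hg : ContinuousAt g 0 := by fun_prop
  have hg0 : g 0 = x := by simp [g]
  rw [← hg0] at h hf
  rw [iteratedDeriv_succ, iteratedDeriv_one]
  exact (h.comp_continuous hg).deriv_deriv_nonpos (hf.comp hg)

theorem spatialLaplacian_eq_sum_lineDeriv (f : ℝᵈ → ℝ) (x : ℝᵈ) :
    spatialLaplacian f x = ∑ i : Fin d, lineDeriv ℝ
      (fun y => lineDeriv ℝ f y (EuclideanSpace.single i 1)) x (EuclideanSpace.single i 1) := by
  simp only [spatialLaplacian, iteratedDeriv_two_comp_add_smul]

theorem ContDiff.continuous_spatialLaplacian {f : ℝᵈ → ℝ} (hf : ContDiff ℝ 2 f) :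
    Continuous (spatialLaplacian f) := by
  have hD : Continuous (fderiv ℝ (fderiv ℝ f)) :=
    (hf.fderiv_right (m := 1) le_rfl).continuous_fderiv one_ne_zero
  simp only [funext (spatialLaplacian_eq_sum_lineDeriv f), hf.contDiffAt.lineDeriv_lineDeriv]
  fun_prop

theorem exists_mem_sphere_isMaxOn_of_spatialLaplacian_pos {ψ : ℝᵈ → ℝ} {x₀ : ℝᵈ} {r : ℝ}
    (hr : 0 ≤ r) (hψ : ContinuousOn ψ (closedBall x₀ r))
    (hΔ : ∀ x ∈ ball x₀ r, 0 < spatialLaplacian ψ x) :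
    ∃ y ∈ sphere x₀ r, IsMaxOn ψ (closedBall x₀ r) y := by
  obtain ⟨y, hy, hmax⟩ := (isCompact_closedBall x₀ r).exists_isMaxOn
    ⟨x₀, mem_closedBall_self hr⟩ hψ
  refine ⟨y, ?_, hmax⟩
  by_contra hsphere
  have hball : y ∈ ball x₀ r := mem_ball.2 <| (mem_closedBall.1 hy).lt_of_ne hsphere
  have hnhds : closedBall x₀ r ∈ 𝓝 y :=
    mem_of_superset (isOpen_ball.mem_nhds hball) ball_subset_closedBall
  exact (hΔ y hball).not_ge <|
    (hmax.isLocalMax hnhds).spatialLaplacian_nonpos (hψ.continuousAt hnhds)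

theorem ContDiff.mul_sq_le_of_abs_le_of_le_spatialLaplacian {φ : ℝᵈ → ℝ} (hφ : ContDiff ℝ 2 φ)
    {x₀ : ℝᵈ} {r κ η : ℝ} (hr : 0 ≤ r) (hκ : 0 < κ)
    (hφη : ∀ x ∈ closedBall x₀ r, |φ x| ≤ η)
    (hΔ : ∀ x ∈ ball x₀ r, κ ≤ spatialLaplacian φ x) :
    κ * r ^ 2 ≤ 4 * (d + 1) * η := by
  set a := κ / (2 * (d + 1))
  set ψ := φ - fun ξ => a * ‖ξ - x₀‖ ^ 2
  have hq : ContDiff ℝ 2 fun ξ : ℝᵈ => a * ‖ξ - x₀‖ ^ 2 :=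
    contDiff_const.mul ((contDiff_norm_sq ℝ).comp (contDiff_id.sub contDiff_const))
  have ha : 2 * (d + 1) * a = κ := by simp only [a]; field_simp
  have ha₀ : 0 < a := by positivity
  have hΔψ : ∀ x ∈ ball x₀ r, 0 < spatialLaplacian ψ x := fun x hx => by
    rw [hφ.spatialLaplacian_sub hq, spatialLaplacian_const_mul_norm_sub_sq]
    linarith [hΔ x hx]
  obtain ⟨y, hy, hmax⟩ := exists_mem_sphere_isMaxOn_of_spatialLaplacian_pos hr
    (hφ.continuous.sub hq.continuous).continuousOn hΔψ
  have hψ := hmax (mem_closedBall_self hr)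
  simp only [mem_ofPred_eq, Pi.sub_apply, sub_self, norm_zero] at hψ
  rw [← dist_eq_norm, mem_sphere.1 hy] at hψ
  have h₀ := abs_le.1 (hφη x₀ (mem_closedBall_self hr))
  have hy' := abs_le.1 (hφη y (sphere_subset_closedBall hy))
  calc κ * r ^ 2 = 2 * (d + 1) * (a * r ^ 2) := by rw [← ha]; ring
    _ ≤ 2 * (d + 1) * (2 * η) := mul_le_mul_of_nonneg_left (by linarith) (by positivity)
    _ = 4 * (d + 1) * η := by ring

theorem le_spatialLaplacian_of_tendstoUniformlyOn {ι : Type*} {l : Filter ι} [l.NeBot]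
    {F : ι → ℝᵈ → ℝ} {f : ℝᵈ → ℝ} {x₀ : ℝᵈ} {s : Set ℝᵈ} {k : ℝ}
    (hF : ∀ᶠ i in l, ContDiff ℝ 2 (F i)) (hf : ContDiff ℝ 2 f) (hs : s ∈ 𝓝 x₀)
    (hFf : TendstoUniformlyOn F f l s)
    (hΔ : Tendsto (fun q : ℝᵈ × ι => spatialLaplacian (F q.2) q.1) (𝓝 x₀ ×ˢ l) (𝓝 k)) :
    k ≤ spatialLaplacian f x₀ := by
  by_contra! hlt
  set κ := (k - spatialLaplacian f x₀) / 2
  have hκ : 0 < κ := half_pos (sub_pos.2 hlt)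
  have hgap : ∀ᶠ q in 𝓝 x₀ ×ˢ l, κ ≤ spatialLaplacian (F q.2) q.1 - spatialLaplacian f q.1 :=
    (hΔ.sub ((hf.continuous_spatialLaplacian.tendsto x₀).comp tendsto_fst)).eventually
      (eventually_ge_nhds (half_lt_self (sub_pos.2 hlt)))
  obtain ⟨near, hnear, late, hlate, hgap_near⟩ := eventually_prod_iff.1 hgap
  obtain ⟨r, hr, hball⟩ := nhds_basis_closedBall.mem_iff.1 (inter_mem hnear hs)
  set η := κ * r ^ 2 / (8 * (d + 1))
  have hη : 0 < η := by positivity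
  obtain ⟨i, hiF, hilate, hiη⟩ :=
    (hF.and (hlate.and (Metric.tendstoUniformlyOn_iff.1 hFf η hη))).exists
  have hbound := ContDiff.mul_sq_le_of_abs_le_of_le_spatialLaplacian (φ := F i - f)
    (hiF.sub hf) hr.le hκ
    (fun x hx => by
      rw [Pi.sub_apply, ← Real.dist_eq, dist_comm]
      exact (hiη x (hball hx).2).le)
    (fun x hx => by
      rw [hiF.spatialLaplacian_sub hf]
      exact hgap_near (hball (ball_subset_closedBall hx)).1 hilate)
  have : 4 * (d + 1) * η = κ * r ^ 2 / 2 := by simp only [η]; field_simp; ring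
  nlinarith [mul_pos hκ (pow_pos hr 2)]

theorem spatialLaplacian_eq_of_tendstoUniformlyOn {ι : Type*} {l : Filter ι} [l.NeBot]
    {F : ι → ℝᵈ → ℝ} {f : ℝᵈ → ℝ} {x₀ : ℝᵈ} {s : Set ℝᵈ} {k : ℝ}
    (hF : ∀ᶠ i in l, ContDiff ℝ 2 (F i)) (hf : ContDiff ℝ 2 f) (hs : s ∈ 𝓝 x₀)
    (hFf : TendstoUniformlyOn F f l s)
    (hΔ : Tendsto (fun q : ℝᵈ × ι => spatialLaplacian (F q.2) q.1) (𝓝 x₀ ×ˢ l) (𝓝 k)) :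
    spatialLaplacian f x₀ = k := by
  refine le_antisymm ?_ (le_spatialLaplacian_of_tendstoUniformlyOn hF hf hs hFf hΔ)
  have := le_spatialLaplacian_of_tendstoUniformlyOn (F := fun i => -F i) (f := -f)
    (hF.mono fun i hi => hi.neg) hf.neg hs hFf.neg
    (by simpa only [spatialLaplacian_neg] using hΔ.neg)
  rwa [spatialLaplacian_neg, neg_le_neg_iff] at this

theorem deriv_comp_prodMk_left (G : ℝᵈ × ℝ → ℝ) (x : ℝᵈ) (t : ℝ) :
    deriv (fun s => G (x, s)) t = lineDeriv ℝ G (x, t) (0, 1) := by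
  simpa using deriv_comp_add_smul G (x, 0) (0, 1) t

theorem spatialLaplacian_comp_prodMk_right (G : ℝᵈ × ℝ → ℝ) (x : ℝᵈ) (t : ℝ) :
    spatialLaplacian (fun ξ => G (ξ, t)) x = ∑ i : Fin d,
      lineDeriv ℝ (fun q => lineDeriv ℝ G q (EuclideanSpace.single i 1, 0)) (x, t)
        (EuclideanSpace.single i 1, 0) := by
  refine Finset.sum_congr rfl fun i _ => ?_
  simpa using iteratedDeriv_two_comp_add_smul G (x, t) (EuclideanSpace.single i 1, 0)

theorem hasDerivAt_spatialLaplacian_comp_prodMk {G : ℝᵈ × ℝ → ℝ} {x : ℝᵈ} {t : ℝ}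
    (hG : ContDiffAt ℝ 3 G (x, t)) :
    HasDerivAt (fun s => spatialLaplacian (fun ξ => G (ξ, s)) x)
      (spatialLaplacian (fun ξ => deriv (fun s => G (ξ, s)) t) x) t := by
  simp only [deriv_comp_prodMk_left, spatialLaplacian_comp_prodMk_right G]
  rw [spatialLaplacian_comp_prodMk_right (fun q => lineDeriv ℝ G q (0, 1))]
  refine HasDerivAt.fun_sum fun i _ => ?_
  rw [← hG.lineDeriv_lineDeriv_lineDeriv_comm, ← deriv_comp_prodMk_left]
  have hdiff := ((hG.lineDeriv_right (n := 2) (EuclideanSpace.single i 1, 0)).lineDeriv_right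
    (n := 1) (EuclideanSpace.single i 1, 0)).differentiableAt one_ne_zero
  exact (hdiff.comp t ((differentiableAt_const x).prodMk differentiableAt_id)).hasDerivAt

theorem hasDerivAt_deriv_of_deriv_eq_spatialLaplacian_add_mul {u : ℝᵈ → ℝ → ℝ} {c : ℝ}
    {x : ℝᵈ} {t : ℝ} (hu : ContDiffAt ℝ 3 (fun q : ℝᵈ × ℝ => u q.1 q.2) (x, t))
    (hpde : ∀ᶠ s in 𝓝 t, deriv (u x) s = spatialLaplacian (fun ξ => u ξ s) x + c * u x s) :
    HasDerivAt (deriv (u x))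
      (spatialLaplacian (fun ξ => deriv (u ξ) t) x + c * deriv (u x) t) t := by
  have hux : DifferentiableAt ℝ (u x) t := (hu.differentiableAt (by norm_num)).comp t
    ((differentiableAt_const x).prodMk differentiableAt_id)
  exact ((hasDerivAt_spatialLaplacian_comp_prodMk hu).add
    (hux.hasDerivAt.const_mul c)).congr_of_eventuallyEq hpde

theorem spatialLaplacian_eq_of_continuousOn {u L : ℝᵈ → ℝ → ℝ}
    (hu : ContinuousOn (fun q : ℝᵈ × ℝ => u q.1 q.2) (univ ×ˢ Ici 0))
    (hu₀ : ContDiff ℝ 2 fun ξ => u ξ 0) (hut : ∀ t : ℝ, 0 < t → ContDiff ℝ 2 fun ξ => u ξ t)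
    (hL : ContinuousOn (fun q : ℝᵈ × ℝ => L q.1 q.2) (univ ×ˢ Ici 0))
    (hLu : ∀ x, ∀ t : ℝ, 0 < t → L x t = spatialLaplacian (fun ξ => u ξ t) x) (x : ℝᵈ) :
    spatialLaplacian (fun ξ => u ξ 0) x = L x 0 := by
  refine spatialLaplacian_eq_of_tendstoUniformlyOn (F := fun t ξ => u ξ t) (l := 𝓝[>] 0)
    (eventually_mem_nhdsWithin.mono hut) hu₀ (closedBall_mem_nhds x one_pos)
    (fun U hU => (hu.tendstoUniformlyOn_nhdsGE_zero (isCompact_closedBall x 1) U hU).filter_mono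
      (nhdsWithin_mono _ Ioi_subset_Ici_self))
    ((hL.tendsto_nhds_prod_nhdsGT_zero x).congr' ?_)
  filter_upwards [prod_mem_prod univ_mem self_mem_nhdsWithin] with q hq using hLu q.1 q.2 hq.2

end

theorem coefficient_elimination_general (d : ℕ)
    (Ω : Set (EuclideanSpace ℝ (Fin d)))
    (c : EuclideanSpace ℝ (Fin d) → ℝ)
    (p : EuclideanSpace ℝ (Fin d) → ℝ) (hp : ContDiff ℝ 2 p)
    (hpne : ∀ x ∈ closure Ω, p x ≠ 0)
    (u v L : EuclideanSpace ℝ (Fin d) → ℝ → ℝ)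
    (hu_cont : ContinuousOn (fun q : EuclideanSpace ℝ (Fin d) × ℝ => u q.1 q.2)
      (Set.univ ×ˢ Set.Ici (0 : ℝ)))
    (hu_smooth : ContDiffOn ℝ 3 (fun q : EuclideanSpace ℝ (Fin d) × ℝ => u q.1 q.2)
      (Set.univ ×ˢ Set.Ioi (0 : ℝ)))
    (hv_cont : ContinuousOn (fun q : EuclideanSpace ℝ (Fin d) × ℝ => v q.1 q.2)
      (Set.univ ×ˢ Set.Ici (0 : ℝ)))
    (hv : ∀ x, ∀ t : ℝ, 0 < t → v x t = deriv (u x) t)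
    (hL_cont : ContinuousOn (fun q : EuclideanSpace ℝ (Fin d) × ℝ => L q.1 q.2)
      (Set.univ ×ˢ Set.Ici (0 : ℝ)))
    (hL : ∀ x, ∀ t : ℝ, 0 < t → L x t = spatialLaplacian (fun ξ => u ξ t) x)
    (hpde : ∀ x, ∀ t : ℝ, 0 < t →
      deriv (u x) t = spatialLaplacian (fun ξ => u ξ t) x + c x * u x t)
    (hinit : ∀ x, u x 0 = p x) :
    (∀ x ∈ Ω, v x 0 = spatialLaplacian p x + c x * p x) ∧
    (∀ x ∈ Ω, c x = (v x 0 - spatialLaplacian p x) / p x) ∧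
    (∀ x ∈ Ω, ∀ t : ℝ, 0 < t →
      deriv (v x) t = spatialLaplacian (fun ξ => v ξ t) x
        + ((v x 0 - spatialLaplacian p x) / p x) * v x t) := by
  have hu : ∀ x, ∀ t : ℝ, 0 < t →
      ContDiffAt ℝ 3 (fun q : EuclideanSpace ℝ (Fin d) × ℝ => u q.1 q.2) (x, t) := fun x t ht =>
    hu_smooth.contDiffAt ((isOpen_univ.prod isOpen_Ioi).mem_nhds ⟨trivial, ht⟩)
  have hut : ∀ t : ℝ, 0 < t → ContDiff ℝ 2 fun ξ => u ξ t := fun t ht =>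
    contDiff_iff_contDiffAt.2 fun ξ =>
      ((hu ξ t ht).of_le (by norm_num)).comp ξ (contDiffAt_id.prodMk contDiffAt_const)
  have hLp : ∀ x, spatialLaplacian p x = L x 0 := fun x => by
    simpa only [hinit] using spatialLaplacian_eq_of_continuousOn hu_cont
      (by simpa only [hinit] using hp) hut hL_cont hL x
  have hi : ∀ x, v x 0 = spatialLaplacian p x + c x * p x := fun x => by
    rw [hLp, ← hinit]
    refine tendsto_nhds_unique (hv_cont.tendsto_nhdsGT_zero x) (((hL_cont.tendsto_nhdsGT_zero x).add
      ((hu_cont.tendsto_nhdsGT_zero x).const_mul (c x))).congr' ?_)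
    filter_upwards [self_mem_nhdsWithin] with t ht
    rw [hv x t ht, hpde x t ht, hL x t ht]
  have hii : ∀ x ∈ Ω, c x = (v x 0 - spatialLaplacian p x) / p x := fun x hx => by
    rw [hi, eq_div_iff (hpne x (subset_closure hx))]
    ring
  refine ⟨fun x _ => hi x, hii, fun x hx t ht => ?_⟩
  have hvx : v x =ᶠ[𝓝 t] deriv (u x) := eventually_of_mem (Ioi_mem_nhds ht) fun s hs => hv x s hs
  rw [← hii x hx, hvx.deriv_eq, funext fun ξ => hv ξ t ht, hv x t ht]
  exact (hasDerivAt_deriv_of_deriv_eq_spatialLaplacian_add_mul (hu x t ht)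
    (eventually_of_mem (Ioi_mem_nhds ht) fun s hs => hpde x s hs)).deriv

/-- Coefficient elimination: if `u` solves `∂ₜu = Δₓu + c u` with `u(·,0) = p` and `p ≠ 0`
on the closure of `Ω`, and `v` (resp. `L`) is the continuous extension to `t = 0` of
`∂ₜu` (resp. `Δₓu`), then (i) `v(x,0) = Δp(x) + c(x)p(x)` on `Ω`,
(ii) `c(x) = (v(x,0) - Δp(x))/p(x)` on `Ω`, and (iii) `v` solves the nonlinear nonlocal
equation `∂ₜv = Δₓv + ((v(·,0) - Δp)/p) v` on `Ω × (0, ∞)`. -/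
theorem coefficient_elimination (d : ℕ) (hd : 1 ≤ d)
    (Ω : Set (EuclideanSpace ℝ (Fin d)))
    (c : EuclideanSpace ℝ (Fin d) → ℝ) (hc : Continuous c)
    (p : EuclideanSpace ℝ (Fin d) → ℝ) (hp : ContDiff ℝ 2 p)
    (hpne : ∀ x ∈ closure Ω, p x ≠ 0)
    (u v L : EuclideanSpace ℝ (Fin d) → ℝ → ℝ)
    (hu_cont : ContinuousOn (fun q : EuclideanSpace ℝ (Fin d) × ℝ => u q.1 q.2)
      (Set.univ ×ˢ Set.Ici (0 : ℝ)))
    (hu_smooth : ContDiffOn ℝ 3 (fun q : EuclideanSpace ℝ (Fin d) × ℝ => u q.1 q.2)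
      (Set.univ ×ˢ Set.Ioi (0 : ℝ)))
    (hv_cont : ContinuousOn (fun q : EuclideanSpace ℝ (Fin d) × ℝ => v q.1 q.2)
      (Set.univ ×ˢ Set.Ici (0 : ℝ)))
    (hv : ∀ x, ∀ t : ℝ, 0 < t → v x t = deriv (u x) t)
    (hL_cont : ContinuousOn (fun q : EuclideanSpace ℝ (Fin d) × ℝ => L q.1 q.2)
      (Set.univ ×ˢ Set.Ici (0 : ℝ)))
    (hL : ∀ x, ∀ t : ℝ, 0 < t → L x t = spatialLaplacian (fun ξ => u ξ t) x)
    (hpde : ∀ x, ∀ t : ℝ, 0 < t →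
      deriv (u x) t = spatialLaplacian (fun ξ => u ξ t) x + c x * u x t)
    (hinit : ∀ x, u x 0 = p x) :
    (∀ x ∈ Ω, v x 0 = spatialLaplacian p x + c x * p x) ∧
    (∀ x ∈ Ω, c x = (v x 0 - spatialLaplacian p x) / p x) ∧
    (∀ x ∈ Ω, ∀ t : ℝ, 0 < t →
      deriv (v x) t = spatialLaplacian (fun ξ => v ξ t) x
        + ((v x 0 - spatialLaplacian p x) / p x) * v x t) :=
  coefficient_elimination_general d Ω c p hp hpne u v L hu_cont hu_smooth hv_cont hv hL_cont hL hpde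
    hinit
end
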